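/- Let D be an open disc in ℂ with center c, and let C₁, C₂ be the images of two injective continuous paths from a boundary point z₁ to a boundary point z₂ of D that intersect only at z₁ and z₂, with c not on C₁ ∪ C₂. Then D \ (C₁ ∪ C₂) is not connected; in particular there is a component S of D \ (C₁ ∪ C₂) (the 'island' between the curves) such that no path in D \ (C₁ ∪ C₂) joins a point of S to a point of a different component. -/

import Mathlib

open Set Metric Complex Real

private lemma prod_ratio_telescope (a : ℕ → ℂ) (n : ℕ) (h : ∀ j ≤ n, a j ≠ 0) :
    ∏ j ∈ Finset.range n, a (j + 1) / a j = a n / a 0 := by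
  induction n with
  | zero => rw [Finset.prod_range_zero, div_self (h 0 le_rfl)]
  | succ n ih =>
    rw [Finset.prod_range_succ, ih (fun j hj => h j (hj.trans n.le_succ))]
    have h0 : a 0 ≠ 0 := h 0 (Nat.zero_le _)
    have hn : a n ≠ 0 := h n n.le_succ
    field_simp

/-- Continuous argument lifting on a convex compact set. -/
private lemma lift_exists {K : Set ℂ} (hK : Convex ℝ K) (hKc : IsCompact K)
    {G : ℂ → ℂ} (hG : ContinuousOn G K) (h0 : ∀ z ∈ K, G z ≠ 0) :
    ∃ θ : ℂ → ℝ, ContinuousOn θ K ∧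
      ∀ z ∈ K, G z = (‖G z‖ : ℂ) * Complex.exp (θ z * Complex.I) := by
  rcases K.eq_empty_or_nonempty with rfl | ⟨c₀, hc₀⟩
  · exact ⟨fun _ => 0, continuousOn_empty _, by simp⟩
  obtain ⟨zm, hzm, hmin⟩ := hKc.exists_isMinOn ⟨c₀, hc₀⟩ (hG.norm)
  set m : ℝ := ‖G zm‖ with hm
  have hmpos : 0 < m := norm_pos_iff.2 (h0 zm hzm)
  have hmle : ∀ z ∈ K, m ≤ ‖G z‖ := fun z hz => hmin hz
  have huc : UniformContinuousOn G K := hKc.uniformContinuousOn_of_continuous hG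
  rw [Metric.uniformContinuousOn_iff] at huc
  obtain ⟨δ, hδ, hucδ⟩ := huc m hmpos
  obtain ⟨R, hR⟩ := hKc.isBounded.subset_closedBall c₀
  have hRpos : 0 ≤ R := by have := hR hc₀; simpa using this
  obtain ⟨n, hn⟩ := exists_nat_gt (R / δ)
  have hnpos : 0 < (n : ℝ) := lt_of_le_of_lt (div_nonneg hRpos hδ.le) hn
  set p : ℕ → ℂ → ℂ := fun j z => c₀ + (j / n : ℝ) * (z - c₀) with hp
  have hpK : ∀ j, j ≤ n → ∀ z ∈ K, p j z ∈ K := by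
    intro j hj z hz
    have ht0 : (0:ℝ) ≤ (j / n : ℝ) := by positivity
    have ht1 : (j / n : ℝ) ≤ 1 := by rw [div_le_one hnpos]; exact_mod_cast hj
    have := hK hc₀ hz (by linarith : (0:ℝ) ≤ 1 - j/n) ht0 (by ring)
    convert this using 1
    simp only [smul_eq_mul, Complex.real_smul, hp]
    push_cast; ring
  -- consecutive points are close
  have hclose : ∀ j, j + 1 ≤ n → ∀ z ∈ K, ‖G (p (j+1) z) - G (p j z)‖ < m := by
    intro j hj z hz
    have hd : dist (p (j+1) z) (p j z) < δ := by
      have h1 : p (j+1) z - p j z = (1 / n : ℝ) * (z - c₀) := by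
        simp only [hp]; push_cast; ring
      rw [dist_eq_norm, h1]
      have hzc : ‖z - c₀‖ ≤ R := by
        have := hR hz; rwa [mem_closedBall, dist_eq_norm] at this
      calc ‖((1/n : ℝ) : ℂ) * (z - c₀)‖ = (1/n) * ‖z - c₀‖ := by
            rw [norm_mul, Complex.norm_real, Real.norm_eq_abs, abs_of_pos (by positivity)]
        _ ≤ (1/n) * R := by
            apply mul_le_mul_of_nonneg_left hzc (by positivity)
        _ < δ := by
            rw [div_mul_eq_mul_div, one_mul, div_lt_iff₀ hnpos]
            have := (div_lt_iff₀ hδ).1 hn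
            linarith
    have := hucδ (p (j+1) z) (hpK _ hj _ hz) (p j z) (hpK _ (le_trans (Nat.le_succ j) hj) _ hz) hd
    rwa [dist_eq_norm] at this
  -- ratios have positive real part
  set q : ℕ → ℂ → ℂ := fun j z => G (p (j+1) z) / G (p j z) with hq
  have hqne : ∀ j, j + 1 ≤ n → ∀ z ∈ K, ‖q j z - 1‖ < 1 := by
    intro j hj z hz
    have hden : G (p j z) ≠ 0 := h0 _ (hpK _ (le_trans (Nat.le_succ j) hj) _ hz)
    have : q j z - 1 = (G (p (j+1) z) - G (p j z)) / G (p j z) := by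
      simp only [hq]; rw [sub_div, div_self hden]
    rw [this, norm_div, div_lt_one (norm_pos_iff.2 hden)]
    exact lt_of_lt_of_le (hclose j hj z hz) (hmle _ (hpK _ (le_trans (Nat.le_succ j) hj) _ hz))
  have hqpos : ∀ j, j + 1 ≤ n → ∀ z ∈ K, 0 < (q j z).re := by
    intro j hj z hz
    have h1 := hqne j hj z hz
    have : |(q j z).re - 1| < 1 := by
      calc |(q j z).re - 1| = |(q j z - 1).re| := by simp
        _ ≤ ‖q j z - 1‖ := Complex.abs_re_le_norm _
        _ < 1 := h1
    have := abs_lt.1 this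
    linarith [this.1]
  -- define θ
  refine ⟨fun z => Complex.arg (G c₀) + ∑ j ∈ Finset.range n, Complex.arg (q j z), ?_, ?_⟩
  · apply ContinuousOn.add continuousOn_const
    apply continuousOn_finset_sum
    intro j hj
    have hjn : j + 1 ≤ n := Finset.mem_range.1 hj
    have hpcont : ∀ i, i ≤ n → ContinuousOn (fun z => G (p i z)) K := by
      intro i hi
      apply hG.comp
      · exact (continuous_const.add (continuous_const.mul (continuous_id.sub continuous_const))).continuousOn
      · intro z hz; exact hpK i hi z hz
    have hqcont : ContinuousOn (fun z => q j z) K :=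
      (hpcont _ hjn).div (hpcont _ (le_trans (Nat.le_succ j) hjn))
        (fun z hz => h0 _ (hpK _ (le_trans (Nat.le_succ j) hjn) _ hz))
    intro z hz
    have := (Complex.continuousAt_arg (Or.inl (hqpos j hjn z hz))).comp_continuousWithinAt
      (hqcont z hz)
    exact this
  · intro z hz
    have hGz : G z ≠ 0 := h0 z hz
    have hGc : G c₀ ≠ 0 := h0 c₀ hc₀
    have key : ∀ w : ℂ, w ≠ 0 → Complex.exp (Complex.arg w * Complex.I) = w / (‖w‖ : ℂ) := by
      intro w hw
      rw [eq_div_iff (by exact_mod_cast norm_ne_zero_iff.2 hw), mul_comm]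
      exact Complex.norm_mul_exp_arg_mul_I w
    have hexp : Complex.exp ((Complex.arg (G c₀) + ∑ j ∈ Finset.range n, Complex.arg (q j z) : ℝ) * Complex.I)
        = (G c₀ / ‖G c₀‖) * ∏ j ∈ Finset.range n, (q j z / ‖q j z‖) := by
      push_cast
      rw [add_mul, Complex.exp_add, key _ hGc]
      congr 1
      rw [Finset.sum_mul, Complex.exp_sum]
      apply Finset.prod_congr rfl
      intro j hj
      have hjn : j + 1 ≤ n := Finset.mem_range.1 hj
      exact key _ (div_ne_zero (h0 _ (hpK _ hjn _ hz))
        (h0 _ (hpK _ (le_trans (Nat.le_succ j) hjn) _ hz)))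
    have hprod : ∏ j ∈ Finset.range n, q j z = G z / G c₀ := by
      have ht := prod_ratio_telescope (fun j => G (p j z)) n
        (fun j hj => h0 _ (hpK j hj z hz))
      have hpn : p n z = z := by
        simp only [hp]
        rw [div_self (ne_of_gt hnpos)]
        push_cast; ring
      have hp0 : p 0 z = c₀ := by simp [hp]
      have ht' : ∏ j ∈ Finset.range n, G (p (j+1) z) / G (p j z)
          = G (p n z) / G (p 0 z) := by simpa using ht
      simp only [hq]
      rw [ht', hpn, hp0]
    rw [hexp, Finset.prod_div_distrib, hprod]
    have hnorm : ∏ j ∈ Finset.range n, ((‖q j z‖ : ℝ) : ℂ) = ((‖G z / G c₀‖ : ℝ) : ℂ) := by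
      rw [← hprod, norm_prod]
      push_cast
      rfl
    rw [hnorm, norm_div]
    have h1 : ((‖G z‖ : ℝ) : ℂ) ≠ 0 := by
      exact_mod_cast norm_ne_zero_iff.2 hGz
    have h2 : ((‖G c₀‖ : ℝ) : ℂ) ≠ 0 := by
      exact_mod_cast norm_ne_zero_iff.2 hGc
    push_cast
    field_simp [hGc, h1, h2]


private lemma cos_branch_pointwise {t : ℝ} (h : 0 ≤ Real.cos t) :
    ∃ k : ℤ, |t - 2 * π * k| ≤ π / 2 := by
  refine ⟨round (t / (2 * π)), ?_⟩
  set k := round (t / (2 * π)) with hk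
  have hπ := Real.pi_pos
  have h1 : |t / (2 * π) - k| ≤ 1 / 2 := abs_sub_round _
  have h2 : |t - 2 * π * k| ≤ π := by
    have he : t - 2 * π * k = (2 * π) * (t / (2 * π) - k) := by
      field_simp
    rw [he, abs_mul, _root_.abs_of_pos (by positivity : (0:ℝ) < 2 * π)]
    have := mul_le_mul_of_nonneg_left h1 (by positivity : (0:ℝ) ≤ 2 * π)
    linarith
  by_contra hcon
  push_neg at hcon
  have hcos : Real.cos (t - 2 * π * k) = Real.cos t := by
    have := Real.cos_sub_int_mul_two_pi t k
    rw [← this]; ring_nf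
  set u := t - 2 * π * k with hu
  have : Real.cos u < 0 := by
    rcases abs_le.1 h2 with ⟨hl, hr⟩
    rcases lt_or_ge u 0 with hneg | hpos
    · rw [← Real.cos_neg]
      apply Real.cos_neg_of_pi_div_two_lt_of_lt
      · rw [_root_.abs_of_neg hneg] at hcon; linarith
      · linarith
    · apply Real.cos_neg_of_pi_div_two_lt_of_lt
      · rw [_root_.abs_of_nonneg hpos] at hcon; linarith
      · linarith
  rw [hcos] at this; linarith

private lemma cos_branch {X : Type*} [TopologicalSpace X] {s : Set X}
    (hs : IsPreconnected s) {ψ : X → ℝ} (hψ : ContinuousOn ψ s)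
    (h : ∀ x ∈ s, 0 ≤ Real.cos (ψ x)) :
    ∃ k : ℤ, ∀ x ∈ s, |ψ x - 2 * π * k| ≤ π / 2 := by
  have hπ := Real.pi_pos
  rcases s.eq_empty_or_nonempty with rfl | ⟨x₀, hx₀⟩
  · exact ⟨0, by simp⟩
  obtain ⟨k₀, hk₀⟩ := cos_branch_pointwise (h x₀ hx₀)
  refine ⟨k₀, fun x hx => ?_⟩
  obtain ⟨k, hk⟩ := cos_branch_pointwise (h x hx)
  -- show k = k₀
  have key : ∀ y z : X, y ∈ s → z ∈ s → ∀ ky kz : ℤ, |ψ y - 2 * π * ky| ≤ π / 2 →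
      |ψ z - 2 * π * kz| ≤ π / 2 → ky < kz → False := by
    intro y z hy hz ky kz hby hbz hlt
    have hky : (ky : ℝ) + 1 ≤ kz := by exact_mod_cast hlt
    rcases abs_le.1 hby with ⟨hby1, hby2⟩
    rcases abs_le.1 hbz with ⟨hbz1, hbz2⟩
    have hc1 : ψ y ≤ 2 * π * ky + π := by linarith
    have hc2 : 2 * π * ky + π ≤ ψ z := by nlinarith
    have hmem : (2 * π * ky + π) ∈ Icc (ψ y) (ψ z) := ⟨by linarith, hc2⟩
    obtain ⟨x₁, hx₁, hψx₁⟩ := hs.intermediate_value hy hz hψ hmem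
    have : Real.cos (ψ x₁) = -1 := by
      rw [hψx₁]
      have : 2 * π * ky + π = π + ky * (2 * π) := by ring
      rw [this, Real.cos_add_int_mul_two_pi, Real.cos_pi]
    have hge := h x₁ hx₁
    rw [this] at hge
    linarith
  have : k = k₀ := by
    rcases lt_trichotomy k k₀ with hlt | heq | hgt
    · exact absurd (key x x₀ hx hx₀ k k₀ hk hk₀ hlt) (fun h => h)
    · exact heq
    · exact absurd (key x₀ x hx₀ hx k₀ k hk₀ hk hgt) (fun h => h)
  rwa [this] at hk


private lemma pin {x : ℝ} {a : ℤ} (hx1 : -π < x) (hx2 : x < π)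
    (h : |x + 2 * π * a| ≤ π) : a = 0 := by
  have hπ := Real.pi_pos
  rcases abs_le.1 h with ⟨h1, h2⟩
  have ha1 : (a:ℝ) < 1 := by nlinarith
  have ha2 : (-1:ℝ) < a := by nlinarith
  have : a < 1 := by exact_mod_cast ha1
  have : -1 < a := by exact_mod_cast ha2
  omega

set_option maxHeartbeats 1000000 in
private lemma crossN {e : ℝ} (he0 : 0 < e) (heπ : e < π) {f g : ℝ → ℂ}
    (hf : ContinuousOn f (Icc 0 1)) (hg : ContinuousOn g (Icc 0 1))
    (hfb : ∀ s ∈ Icc (0:ℝ) 1, f s ∈ closedBall (0:ℂ) 1)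
    (hgb : ∀ t ∈ Icc (0:ℝ) 1, g t ∈ closedBall (0:ℂ) 1)
    (hf0 : f 0 = Complex.exp (-(e:ℂ) * Complex.I))
    (hf1 : f 1 = Complex.exp ((e:ℂ) * Complex.I))
    (hg0 : g 0 = 1) (hg1 : g 1 = -1) :
    ∃ s ∈ Icc (0:ℝ) 1, ∃ t ∈ Icc (0:ℝ) 1, f s = g t := by
  by_contra hcon
  push_neg at hcon
  have hπ := Real.pi_pos
  set Q : Set ℂ := {z : ℂ | z.re ∈ Icc (0:ℝ) 1 ∧ z.im ∈ Icc (0:ℝ) 1} with hQ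
  have hQconv : Convex ℝ Q := by
    intro z hz w hw a b ha hb hab
    constructor
    · have : (a • z + b • w).re = a * z.re + b * w.re := by
        simp [Complex.real_smul]
      rw [this]
      exact convex_Icc (0:ℝ) 1 hz.1 hw.1 ha hb hab
    · have : (a • z + b • w).im = a * z.im + b * w.im := by
        simp [Complex.real_smul]
      rw [this]
      exact convex_Icc (0:ℝ) 1 hz.2 hw.2 ha hb hab
  have hQcomp : IsCompact Q := by
    have himg : Q = (fun p : ℝ × ℝ => (p.1 : ℂ) + p.2 * Complex.I) ''
        (Icc 0 1 ×ˢ Icc 0 1) := by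
      ext z
      constructor
      · rintro ⟨h1, h2⟩
        exact ⟨(z.re, z.im), ⟨h1, h2⟩, by simp [Complex.re_add_im]⟩
      · rintro ⟨⟨x, y⟩, ⟨hx, hy⟩, rfl⟩
        refine ⟨by simpa using hx, by simpa using hy⟩
    rw [himg]
    exact ((isCompact_Icc).prod (isCompact_Icc)).image (by continuity)
  set G : ℂ → ℂ := fun z => g z.im - f z.re with hG
  have hmapsre : ∀ z ∈ Q, z.re ∈ Icc (0:ℝ) 1 := fun z hz => hz.1
  have hmapsim : ∀ z ∈ Q, z.im ∈ Icc (0:ℝ) 1 := fun z hz => hz.2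
  have hGcont : ContinuousOn G Q :=
    (hg.comp continuous_im.continuousOn hmapsim).sub
      (hf.comp continuous_re.continuousOn hmapsre)
  have hGne : ∀ z ∈ Q, G z ≠ 0 := by
    intro z hz h0
    apply hcon z.re (hmapsre z hz) z.im (hmapsim z hz)
    have h1 : g z.im - f z.re = 0 := by simpa [hG] using h0
    exact (sub_eq_zero.mp h1).symm
  obtain ⟨θ, hθc, hθeq⟩ := lift_exists hQconv hQcomp hGcont hGne
  -- the real-part formula
  have hre : ∀ z ∈ Q, ∀ β : ℝ, (G z * Complex.exp (-(β:ℂ) * Complex.I)).re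
      = ‖G z‖ * Real.cos (θ z - β) := by
    intro z hz β
    rw [hθeq z hz, mul_assoc, ← Complex.exp_add]
    have h1 : ((θ z : ℂ) * Complex.I + -(β:ℂ) * Complex.I) = ((θ z - β : ℝ) : ℂ) * Complex.I := by
      push_cast; ring
    rw [h1, Complex.re_ofReal_mul, Complex.exp_ofReal_mul_I_re]
    have h2 : ‖((‖G z‖ : ℝ) : ℂ) * Complex.exp ((θ z : ℂ) * Complex.I)‖ = ‖G z‖ := by
      simp [norm_mul, Complex.norm_exp_ofReal_mul_I,
        _root_.abs_of_nonneg (norm_nonneg _)]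
    rw [h2]
  have hGpos : ∀ z ∈ Q, 0 < ‖G z‖ := fun z hz => norm_pos_iff.2 (hGne z hz)
  have hcos : ∀ z ∈ Q, ∀ β : ℝ, 0 ≤ (G z * Complex.exp (-(β:ℂ) * Complex.I)).re →
      0 ≤ Real.cos (θ z - β) := by
    intro z hz β h0
    rw [hre z hz β] at h0
    nlinarith [hGpos z hz]
  -- edges
  set E₁ : Set ℂ := (fun x : ℝ => (x:ℂ)) '' Icc 0 1 with hE₁
  set E₂ : Set ℂ := (fun t : ℝ => 1 + t * Complex.I) '' Icc 0 1 with hE₂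
  set E₃ : Set ℂ := (fun x : ℝ => (x:ℂ) + Complex.I) '' Icc 0 1 with hE₃
  set E₄ : Set ℂ := (fun t : ℝ => t * Complex.I) '' Icc 0 1 with hE₄
  have hE₁Q : E₁ ⊆ Q := by rintro z ⟨x, hx, rfl⟩; exact ⟨by simpa using hx, by simp⟩
  have hE₂Q : E₂ ⊆ Q := by rintro z ⟨t, ht, rfl⟩; exact ⟨by simp, by simpa using ht⟩
  have hE₃Q : E₃ ⊆ Q := by rintro z ⟨x, hx, rfl⟩; exact ⟨by simpa using hx, by simp⟩
  have hE₄Q : E₄ ⊆ Q := by rintro z ⟨t, ht, rfl⟩; exact ⟨by simp, by simpa using ht⟩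
  have hpc : ∀ (φ : ℝ → ℂ), Continuous φ → IsPreconnected (φ '' Icc 0 1) :=
    fun φ hφ => (isPreconnected_Icc).image φ hφ.continuousOn
  have habs : ∀ s ∈ Icc (0:ℝ) 1, ‖f s‖ ≤ 1 := by
    intro s hs
    have := hfb s hs
    rwa [mem_closedBall, dist_zero_right] at this
  have habsg : ∀ t ∈ Icc (0:ℝ) 1, ‖g t‖ ≤ 1 := by
    intro t ht
    have := hgb t ht
    rwa [mem_closedBall, dist_zero_right] at this
  -- unit exponentials
  have hexpe : Complex.exp ((e:ℂ) * Complex.I) * Complex.exp (-(e:ℂ) * Complex.I) = 1 := by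
    rw [← Complex.exp_add]; simp
  -- Edge 1 : β = 0
  have hc₁ : ∀ z ∈ E₁, 0 ≤ Real.cos (θ z - 0) := by
    rintro z ⟨x, hx, rfl⟩
    apply hcos _ (hE₁Q ⟨x, hx, rfl⟩)
    have hz : G ((x:ℂ)) = 1 - f x := by simp [hG, hg0]
    have : (G ((x:ℂ)) * Complex.exp (-(0:ℝ) * Complex.I)).re = 1 - (f x).re := by
      rw [hz]; norm_num [Complex.sub_re]
    rw [this]
    have := Complex.re_le_norm (f x)
    have := habs x (by simpa using hx)
    linarith
  -- Edge 3 : β = π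
  have hc₃ : ∀ z ∈ E₃, 0 ≤ Real.cos (θ z - π) := by
    rintro z ⟨x, hx, rfl⟩
    apply hcos _ (hE₃Q ⟨x, hx, rfl⟩)
    have hz : G ((x:ℂ) + Complex.I) = -1 - f x := by simp [hG, hg1]
    have hexp : Complex.exp (-(π:ℝ) * Complex.I) = -1 := by
      push_cast
      rw [neg_mul, Complex.exp_neg, Complex.exp_pi_mul_I]
      norm_num
    have : (G ((x:ℂ) + Complex.I) * Complex.exp (-(π:ℝ) * Complex.I)).re = 1 + (f x).re := by
      rw [hz, hexp]; simp [Complex.sub_re]; ring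
    rw [this]
    have h2 := Complex.abs_re_le_norm (f x)
    have h3 := habs x (by simpa using hx)
    have h4 : -(1:ℝ) ≤ (f x).re := (abs_le.1 (le_trans h2 h3)).1
    linarith
  -- unit modulus facts
  have habse : ∀ x : ℝ, ‖Complex.exp ((x:ℂ) * Complex.I)‖ = 1 := by
    intro x; exact Complex.norm_exp_ofReal_mul_I x
  have hexpπ : Complex.exp (-(π:ℂ) * Complex.I) = -1 := by
    rw [neg_mul, Complex.exp_neg, Complex.exp_pi_mul_I]; norm_num
  -- Edge 2 : β = π + e
  have hc₂ : ∀ z ∈ E₂, 0 ≤ Real.cos (θ z - (π + e)) := by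
    rintro z ⟨t, ht, rfl⟩
    apply hcos _ (hE₂Q ⟨t, ht, rfl⟩)
    have hz : G (1 + (t:ℝ) * Complex.I) = g t - Complex.exp ((e:ℂ) * Complex.I) := by
      simp [hG, hf1]
    have hsplit : Complex.exp (-((π + e : ℝ):ℂ) * Complex.I)
        = -Complex.exp (-(e:ℂ) * Complex.I) := by
      push_cast
      rw [show (-(((π:ℂ)) + e) * Complex.I) = (-(π:ℂ) * Complex.I) + (-(e:ℂ) * Complex.I) by ring,
        Complex.exp_add, hexpπ]
      ring
    have hval : G (1 + (t:ℝ) * Complex.I) * Complex.exp (-((π + e : ℝ):ℂ) * Complex.I)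
        = 1 - g t * Complex.exp (-(e:ℂ) * Complex.I) := by
      rw [hz, hsplit]
      calc (g t - Complex.exp ((e:ℂ) * Complex.I)) * (-Complex.exp (-(e:ℂ) * Complex.I))
          = Complex.exp ((e:ℂ) * Complex.I) * Complex.exp (-(e:ℂ) * Complex.I)
            - g t * Complex.exp (-(e:ℂ) * Complex.I) := by ring
        _ = 1 - g t * Complex.exp (-(e:ℂ) * Complex.I) := by rw [hexpe]
    rw [hval]
    have hb : ‖g t * Complex.exp (-(e:ℂ) * Complex.I)‖ ≤ 1 := by
      rw [norm_mul]
      have h1 : ‖Complex.exp (-(e:ℂ) * Complex.I)‖ = 1 := by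
        rw [show (-(e:ℂ) * Complex.I) = ((-e : ℝ):ℂ) * Complex.I by push_cast; ring]
        exact habse (-e)
      rw [h1, mul_one]
      exact habsg t (by simpa using ht)
    have h2 := Complex.re_le_norm (g t * Complex.exp (-(e:ℂ) * Complex.I))
    simp only [Complex.sub_re, Complex.one_re]
    linarith
  -- Edge 4 : β = π - e
  have hc₄ : ∀ z ∈ E₄, 0 ≤ Real.cos (θ z - (π - e)) := by
    rintro z ⟨t, ht, rfl⟩
    apply hcos _ (hE₄Q ⟨t, ht, rfl⟩)
    have hz : G ((t:ℝ) * Complex.I) = g t - Complex.exp (-(e:ℂ) * Complex.I) := by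
      simp [hG, hf0]
    have hsplit : Complex.exp (-((π - e : ℝ):ℂ) * Complex.I)
        = -Complex.exp ((e:ℂ) * Complex.I) := by
      push_cast
      rw [show (-(((π:ℂ)) - e) * Complex.I) = (-(π:ℂ) * Complex.I) + ((e:ℂ) * Complex.I) by ring,
        Complex.exp_add, hexpπ]
      ring
    have hval : G ((t:ℝ) * Complex.I) * Complex.exp (-((π - e : ℝ):ℂ) * Complex.I)
        = 1 - g t * Complex.exp ((e:ℂ) * Complex.I) := by
      rw [hz, hsplit]
      calc (g t - Complex.exp (-(e:ℂ) * Complex.I)) * (-Complex.exp ((e:ℂ) * Complex.I))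
          = Complex.exp ((e:ℂ) * Complex.I) * Complex.exp (-(e:ℂ) * Complex.I)
            - g t * Complex.exp ((e:ℂ) * Complex.I) := by ring
        _ = 1 - g t * Complex.exp ((e:ℂ) * Complex.I) := by rw [hexpe]
    rw [hval]
    have hb : ‖g t * Complex.exp ((e:ℂ) * Complex.I)‖ ≤ 1 := by
      rw [norm_mul, habse e, mul_one]
      exact habsg t (by simpa using ht)
    have h2 := Complex.re_le_norm (g t * Complex.exp ((e:ℂ) * Complex.I))
    simp only [Complex.sub_re, Complex.one_re]
    linarith
  -- branch constants on the four edges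
  obtain ⟨k₁, hk₁⟩ := cos_branch (hpc _ Complex.continuous_ofReal)
    ((hθc.mono hE₁Q).sub continuousOn_const) hc₁
  obtain ⟨k₂, hk₂⟩ := cos_branch
    (hpc _ (continuous_const.add (Complex.continuous_ofReal.mul continuous_const)))
    ((hθc.mono hE₂Q).sub continuousOn_const) hc₂
  obtain ⟨k₃, hk₃⟩ := cos_branch
    (hpc _ (Complex.continuous_ofReal.add continuous_const))
    ((hθc.mono hE₃Q).sub continuousOn_const) hc₃
  obtain ⟨k₄, hk₄⟩ := cos_branch
    (hpc _ (Complex.continuous_ofReal.mul continuous_const))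
    ((hθc.mono hE₄Q).sub continuousOn_const) hc₄
  -- corner memberships
  have hm1E₁ : (1:ℂ) ∈ E₁ := ⟨1, by norm_num, by norm_num⟩
  have hm1E₂ : (1:ℂ) ∈ E₂ := ⟨0, by norm_num, by norm_num⟩
  have hmiE₂ : (1 + Complex.I : ℂ) ∈ E₂ := ⟨1, by norm_num, by norm_num⟩
  have hmiE₃ : (1 + Complex.I : ℂ) ∈ E₃ := ⟨1, by norm_num, by norm_num⟩
  have hmIE₃ : (Complex.I : ℂ) ∈ E₃ := ⟨0, by norm_num, by norm_num⟩
  have hmIE₄ : (Complex.I : ℂ) ∈ E₄ := ⟨1, by norm_num, by norm_num⟩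
  have hm0E₄ : (0:ℂ) ∈ E₄ := ⟨0, by norm_num, by norm_num⟩
  have hm0E₁ : (0:ℂ) ∈ E₁ := ⟨0, by norm_num, by norm_num⟩
  -- corner estimates
  have hcorner : ∀ (w : ℂ) (β₁ β₂ : ℝ) (ka kb : ℤ), |θ w - β₁ - 2 * π * ka| ≤ π/2 →
      |θ w - β₂ - 2 * π * kb| ≤ π/2 → |(β₂ - β₁) + 2 * π * ((kb:ℝ) - ka)| ≤ π := by
    intro w β₁ β₂ ka kb h1 h2
    have key : (β₂ - β₁) + 2 * π * ((kb:ℝ) - ka)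
        = (θ w - β₁ - 2 * π * ka) - (θ w - β₂ - 2 * π * kb) := by ring
    have h3 : |(β₂ - β₁) + 2 * π * ((kb:ℝ) - ka)| ≤ π := by
      rw [key]
      calc |(θ w - β₁ - 2 * π * ka) - (θ w - β₂ - 2 * π * kb)|
          ≤ |θ w - β₁ - 2 * π * ka| + |θ w - β₂ - 2 * π * kb| := abs_sub _ _
        _ ≤ π := by linarith
    exact h3
  -- corner (1,0) : k₂ = k₁ - 1
  have hC1 : k₂ = k₁ - 1 := by
    have h1 := hk₁ 1 hm1E₁
    have h2 := hk₂ 1 hm1E₂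
    simp only [Pi.sub_apply, sub_zero] at h1
    have h3 := hcorner 1 0 (π + e) k₁ k₂ (by rwa [sub_zero]) h2
    have h4 : |(e - π) + 2 * π * ((k₂ - k₁ + 1 : ℤ):ℝ)| ≤ π := by
      have : (e - π) + 2 * π * ((k₂ - k₁ + 1 : ℤ):ℝ)
          = ((π + e) - 0) + 2 * π * ((k₂:ℝ) - k₁) := by push_cast; ring
      rw [this]
      exact h3
    have := pin (by linarith) (by linarith) h4
    omega
  -- corner (1,1) : k₃ = k₂
  have hC2 : k₃ = k₂ := by
    have h2 := hk₂ _ hmiE₂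
    have h3 := hk₃ _ hmiE₃
    have h4 := hcorner (1 + Complex.I) (π + e) π k₂ k₃ h2 h3
    have h5 : |(-e) + 2 * π * ((k₃ - k₂ : ℤ):ℝ)| ≤ π := by
      have : (-e) + 2 * π * ((k₃ - k₂ : ℤ):ℝ) = (π - (π + e)) + 2 * π * ((k₃:ℝ) - k₂) := by
        push_cast; ring
      rw [this]; exact h4
    have := pin (by linarith) (by linarith) h5
    omega
  -- corner (0,1) : k₄ = k₃
  have hC3 : k₄ = k₃ := by
    have h2 := hk₃ _ hmIE₃
    have h3 := hk₄ _ hmIE₄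
    have h4 := hcorner Complex.I π (π - e) k₃ k₄ h2 h3
    have h5 : |(-e) + 2 * π * ((k₄ - k₃ : ℤ):ℝ)| ≤ π := by
      have : (-e) + 2 * π * ((k₄ - k₃ : ℤ):ℝ) = ((π - e) - π) + 2 * π * ((k₄:ℝ) - k₃) := by
        push_cast; ring
      rw [this]; exact h4
    have := pin (by linarith) (by linarith) h5
    omega
  -- corner (0,0) : k₁ = k₄
  have hC4 : k₁ = k₄ := by
    have h2 := hk₄ _ hm0E₄
    have h3 := hk₁ _ hm0E₁
    simp only [Pi.sub_apply, sub_zero] at h3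
    have h4 := hcorner 0 (π - e) 0 k₄ k₁ h2 (by rwa [sub_zero])
    have h5 : |(e - π) + 2 * π * ((k₁ - k₄ : ℤ):ℝ)| ≤ π := by
      have : (e - π) + 2 * π * ((k₁ - k₄ : ℤ):ℝ) = (0 - (π - e)) + 2 * π * ((k₁:ℝ) - k₄) := by
        push_cast; ring
      rw [this]; exact h4
    have := pin (by linarith) (by linarith) h5
    omega
  omega


private def realSeg (a b : ℝ) : Path ((a:ℂ)) ((b:ℂ)) where
  toFun := fun u => (((1 - (u:ℝ)) * a + (u:ℝ) * b : ℝ) : ℂ)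
  continuous_toFun := by
    apply Complex.continuous_ofReal.comp
    continuity
  source' := by norm_num
  target' := by norm_num

private lemma realSeg_mem (a b : ℝ) (w : ℂ) (hw : w ∈ range ⇑(realSeg a b)) :
    ∃ x : ℝ, x ∈ Icc (min a b) (max a b) ∧ w = (x:ℂ) := by
  obtain ⟨u, rfl⟩ := hw
  refine ⟨(1 - (u:ℝ)) * a + (u:ℝ) * b, ⟨?_, ?_⟩, rfl⟩
  · rcases le_total a b with h | h
    · have := u.2.1; have := u.2.2
      rw [min_eq_left h]; nlinarith
    · have := u.2.1; have := u.2.2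
      rw [min_eq_right h]; nlinarith
  · rcases le_total a b with h | h
    · have := u.2.1; have := u.2.2
      rw [max_eq_right h]; nlinarith
    · have := u.2.1; have := u.2.2
      rw [max_eq_left h]; nlinarith


set_option maxHeartbeats 1000000 in
private lemma key {e : ℝ} (he0 : 0 < e) (heπ : e < π) {γ₁ γ₂ : ℝ → ℂ}
    (hcont₁ : ContinuousOn γ₁ (Icc 0 1)) (hcont₂ : ContinuousOn γ₂ (Icc 0 1))
    (h10 : γ₁ 0 = Complex.exp (-(e:ℂ) * Complex.I))
    (h11 : γ₁ 1 = Complex.exp ((e:ℂ) * Complex.I))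
    (h20 : γ₂ 0 = Complex.exp (-(e:ℂ) * Complex.I))
    (h21 : γ₂ 1 = Complex.exp ((e:ℂ) * Complex.I))
    (hint₁ : γ₁ '' Ioo 0 1 ⊆ ball 0 1) (hint₂ : γ₂ '' Ioo 0 1 ⊆ ball 0 1)
    (hmeet : γ₁ '' Ioo 0 1 ∩ γ₂ '' Ioo 0 1 = ∅)
    {l : ℝ} (hl : l ∈ Icc (-1:ℝ) 1) (hl1 : (l:ℂ) ∈ γ₁ '' Icc 0 1)
    (hlub : ∀ x ∈ Icc (-1:ℝ) 1, (x:ℂ) ∈ γ₁ '' Icc 0 1 ∪ γ₂ '' Icc 0 1 → x ≤ l) :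
    ∃ z₀ y : ℂ, z₀ ∈ ball (0:ℂ) 1 \ (γ₁ '' Icc 0 1 ∪ γ₂ '' Icc 0 1) ∧
      y ∈ ball (0:ℂ) 1 \ (γ₁ '' Icc 0 1 ∪ γ₂ '' Icc 0 1) ∧
      ¬ JoinedIn (ball (0:ℂ) 1 \ (γ₁ '' Icc 0 1 ∪ γ₂ '' Icc 0 1)) z₀ y := by
  have hπ := Real.pi_pos
  have hsin : 0 < Real.sin e := Real.sin_pos_of_pos_of_lt_pi he0 heπ
  set z₁ : ℂ := Complex.exp (-(e:ℂ) * Complex.I) with hz₁d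
  set z₂ : ℂ := Complex.exp ((e:ℂ) * Complex.I) with hz₂d
  have hz₁im : z₁.im = -Real.sin e := by
    rw [hz₁d, show (-(e:ℂ) * Complex.I) = ((-e : ℝ):ℂ) * Complex.I by push_cast; ring,
      Complex.exp_ofReal_mul_I_im, Real.sin_neg]
  have hz₂im : z₂.im = Real.sin e := by
    rw [hz₂d, show ((e:ℂ) * Complex.I) = ((e : ℝ):ℂ) * Complex.I by norm_num,
      Complex.exp_ofReal_mul_I_im]
  -- real points on the curves are in the open interior parameters
  have hreal : ∀ (γ : ℝ → ℂ), γ 0 = z₁ → γ 1 = z₂ → ∀ x : ℝ, ∀ t ∈ Icc (0:ℝ) 1,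
      γ t = (x:ℂ) → t ∈ Ioo (0:ℝ) 1 := by
    intro γ hγ0 hγ1 x t ht heq
    rcases lt_or_eq_of_le ht.1 with h0 | h0
    · rcases lt_or_eq_of_le ht.2 with h1 | h1
      · exact ⟨h0, h1⟩
      · exfalso
        rw [h1, hγ1] at heq
        have : ((x:ℂ)).im = 0 := Complex.ofReal_im x
        rw [← heq, hz₂im] at this
        linarith
    · exfalso
      rw [← h0, hγ0] at heq
      have : ((x:ℂ)).im = 0 := Complex.ofReal_im x
      rw [← heq, hz₁im] at this
      linarith
  -- a real point of a curve is in the open interval and open ball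
  have hrealball : ∀ (γ : ℝ → ℂ), γ '' Ioo 0 1 ⊆ ball 0 1 → γ 0 = z₁ → γ 1 = z₂ →
      ∀ x : ℝ, (x:ℂ) ∈ γ '' Icc 0 1 → x ∈ Ioo (-1:ℝ) 1 ∧ ∃ t ∈ Ioo (0:ℝ) 1, γ t = (x:ℂ) := by
    rintro γ hbi hγ0 hγ1 x ⟨t, ht, heq⟩
    have htIoo := hreal γ hγ0 hγ1 x t ht heq
    have hb : (x:ℂ) ∈ ball (0:ℂ) 1 := heq ▸ hbi ⟨t, htIoo, rfl⟩
    rw [mem_ball, dist_zero_right, Complex.norm_real, Real.norm_eq_abs] at hb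
    exact ⟨abs_lt.1 hb, t, htIoo, heq⟩
  -- norms of endpoints
  have habsz₁ : ‖z₁‖ = 1 := by
    rw [hz₁d, show (-(e:ℂ) * Complex.I) = ((-e : ℝ):ℂ) * Complex.I by push_cast; ring,
      Complex.norm_exp_ofReal_mul_I]
  have habsz₂ : ‖z₂‖ = 1 := by
    rw [hz₂d, show ((e:ℂ) * Complex.I) = ((e : ℝ):ℂ) * Complex.I by norm_num,
      Complex.norm_exp_ofReal_mul_I]
  -- interior of γ₁ is disjoint from all of C₂
  have hdisj₁ : ∀ t ∈ Ioo (0:ℝ) 1, γ₁ t ∉ γ₂ '' Icc 0 1 := by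
    rintro t ht ⟨s, hs, heq⟩
    have hball : γ₁ t ∈ ball (0:ℂ) 1 := hint₁ ⟨t, ht, rfl⟩
    rw [mem_ball_zero_iff] at hball
    have hsIoo : s ∈ Ioo (0:ℝ) 1 := by
      rcases lt_or_eq_of_le hs.1 with h0 | h0
      · rcases lt_or_eq_of_le hs.2 with h1 | h1
        · exact ⟨h0, h1⟩
        · exfalso
          rw [h1, h21] at heq
          rw [← heq, habsz₂] at hball
          linarith
      · exfalso
        rw [← h0, h20] at heq
        rw [← heq, habsz₁] at hball
        linarith
    have hcontra : γ₁ t ∈ γ₁ '' Ioo 0 1 ∩ γ₂ '' Ioo 0 1 := ⟨⟨t, ht, rfl⟩, ⟨s, hsIoo, heq⟩⟩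
    rw [hmeet] at hcontra
    exact hcontra
  -- curves lie in the closed ball
  have hCb : ∀ (γ : ℝ → ℂ), γ 0 = z₁ → γ 1 = z₂ → γ '' Ioo 0 1 ⊆ ball 0 1 →
      ∀ t ∈ Icc (0:ℝ) 1, γ t ∈ closedBall (0:ℂ) 1 := by
    intro γ hγ0 hγ1 hbi t ht
    rcases lt_or_eq_of_le ht.1 with h0 | h0
    · rcases lt_or_eq_of_le ht.2 with h1 | h1
      · exact ball_subset_closedBall (hbi ⟨t, ⟨h0, h1⟩, rfl⟩)
      · rw [h1, hγ1, mem_closedBall_zero_iff, habsz₂]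
    · rw [← h0, hγ0, mem_closedBall_zero_iff, habsz₁]
  -- segments lie in the closed ball
  have hseg : ∀ a b : ℝ, a ∈ Icc (-1:ℝ) 1 → b ∈ Icc (-1:ℝ) 1 →
      ∀ w ∈ range ⇑(realSeg a b), w ∈ closedBall (0:ℂ) 1 := by
    intro a b ha hb w hw
    obtain ⟨x, hx, rfl⟩ := realSeg_mem a b w hw
    rw [mem_closedBall_zero_iff, Complex.norm_real, Real.norm_eq_abs, abs_le]
    constructor
    · calc (-1:ℝ) ≤ min a b := le_min ha.1 hb.1
        _ ≤ x := hx.1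
    · calc x ≤ max a b := hx.2
        _ ≤ 1 := max_le ha.2 hb.2
  -- the compact set A₁ of real points of C₁
  set C₁ : Set ℂ := γ₁ '' Icc 0 1 with hC₁d
  set C₂ : Set ℂ := γ₂ '' Icc 0 1 with hC₂d
  have hC₁closed : IsClosed C₁ := (isCompact_Icc.image_of_continuousOn hcont₁).isClosed
  have hC₂closed : IsClosed C₂ := (isCompact_Icc.image_of_continuousOn hcont₂).isClosed
  set A₁ : Set ℝ := Icc (-1:ℝ) 1 ∩ (fun x : ℝ => (x:ℂ)) ⁻¹' C₁ with hA₁d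
  have hA₁comp : IsCompact A₁ :=
    isCompact_Icc.inter_right (hC₁closed.preimage Complex.continuous_ofReal)
  obtain ⟨m, hmA, hmlb⟩ := hA₁comp.exists_isLeast ⟨l, hl, hl1⟩
  obtain ⟨hlIoo, tl, htl, htleq⟩ := hrealball γ₁ hint₁ h10 h11 l hl1
  obtain ⟨hmIoo, tm, htm, htmeq⟩ := hrealball γ₁ hint₁ h10 h11 m hmA.2
  -- the subarc of γ₁ from l to m
  have hsubmap : ∀ u : unitInterval, tl + (u:ℝ) * (tm - tl) ∈ Ioo (0:ℝ) 1 := by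
    intro u
    have h1 := u.2.1; have h2 := u.2.2
    constructor
    · rcases le_total tl tm with h | h <;> nlinarith [htl.1, htm.1, htl.2, htm.2]
    · rcases le_total tl tm with h | h <;> nlinarith [htl.1, htm.1, htl.2, htm.2]
  set pφ : Path ((l:ℂ)) ((m:ℂ)) :=
    { toFun := fun u => γ₁ (tl + (u:ℝ) * (tm - tl)),
      continuous_toFun := hcont₁.comp_continuous
        (continuous_const.add (continuous_subtype_val.mul continuous_const))
        (fun u => Ioo_subset_Icc_self (hsubmap u)),
      source' := by simpa using htleq,
      target' := by simpa using htmeq } with hpφd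
  have hpφrange : ∀ w ∈ range ⇑pφ, w ∈ γ₁ '' Ioo 0 1 := by
    rintro w ⟨u, rfl⟩
    exact ⟨tl + (u:ℝ) * (tm - tl), hsubmap u, rfl⟩
  have hpφC₂ : ∀ w ∈ range ⇑pφ, w ∉ C₂ := by
    intro w hw hwC
    obtain ⟨t, ht, rfl⟩ := hpφrange w hw
    exact hdisj₁ t ht hwC
  have hpφball : ∀ w ∈ range ⇑pφ, w ∈ closedBall (0:ℂ) 1 :=
    fun w hw => ball_subset_closedBall (hint₁ (hpφrange w hw))
  -- points on [l,1] segment avoid C₂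
  have hseg1C₂ : ∀ w ∈ range ⇑(realSeg 1 l), w ∉ C₂ := by
    intro w hw hwC
    obtain ⟨x, hx, rfl⟩ := realSeg_mem 1 l w hw
    have hxl : l ≤ x := by
      have := hx.1
      rwa [min_eq_right hlIoo.2.le] at this
    have hx1 : x ≤ 1 := by
      have := hx.2
      rwa [max_eq_left hlIoo.2.le] at this
    have hxle : x ≤ l := hlub x ⟨by linarith [hlIoo.1], hx1⟩ (Or.inr hwC)
    have hxeq : x = l := le_antisymm hxle hxl
    rw [hxeq, ← htleq] at hwC
    exact hdisj₁ tl htl hwC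
  -- the set B of real points of C₂ at or below m
  set B : Set ℝ := Icc (-1:ℝ) m ∩ (fun x : ℝ => (x:ℂ)) ⁻¹' C₂ with hBd
  have hBcomp : IsCompact B :=
    isCompact_Icc.inter_right (hC₂closed.preimage Complex.continuous_ofReal)
  have hBne : B.Nonempty := by
    by_contra hB
    rw [not_nonempty_iff_eq_empty] at hB
    -- the path from 1 to -1 avoiding C₂
    set P : Path ((1:ℝ):ℂ) ((-1:ℝ):ℂ) := (realSeg 1 l).trans (pφ.trans (realSeg m (-1)))
      with hPd
    set Pc : Path (1:ℂ) (-1:ℂ) := P.cast (by norm_num) (by norm_num) with hPcd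
    have hPrange : range ⇑Pc = range ⇑(realSeg 1 l) ∪ (range ⇑pφ ∪ range ⇑(realSeg m (-1))) := by
      rw [hPcd, Path.cast_coe, hPd, Path.trans_range, Path.trans_range]
    have hgb : ∀ t ∈ Icc (0:ℝ) 1, Pc.extend t ∈ closedBall (0:ℂ) 1 := by
      intro t _
      have hmem : Pc.extend t ∈ range ⇑Pc := by
        rw [← Path.extend_range]
        exact mem_range_self t
      rw [hPrange] at hmem
      rcases hmem with h | h | h
      · exact hseg 1 l (by norm_num) ⟨hlIoo.1.le, hlIoo.2.le⟩ _ h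
      · exact hpφball _ h
      · exact hseg m (-1) ⟨hmIoo.1.le, hmIoo.2.le⟩ (by norm_num) _ h
    obtain ⟨s, hs, t, ht, heq⟩ := crossN he0 heπ hcont₂
      Pc.continuous_extend.continuousOn
      (fun s hs => hCb γ₂ h20 h21 hint₂ s hs) hgb h20 h21
      (Pc.extend_zero) (Pc.extend_one)
    have hmem : Pc.extend t ∈ range ⇑Pc := by
      rw [← Path.extend_range]; exact mem_range_self t
    have hC₂mem : Pc.extend t ∈ C₂ := ⟨s, hs, heq⟩
    rw [hPrange] at hmem
    rcases hmem with h | h | h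
    · exact hseg1C₂ _ h hC₂mem
    · exact hpφC₂ _ h hC₂mem
    · obtain ⟨x, hx, hxeq⟩ := realSeg_mem m (-1) _ h
      have hx1 : -1 ≤ x := by
        have := hx.1; rwa [min_eq_right hmIoo.1.le] at this
      have hx2 : x ≤ m := by
        have := hx.2; rwa [max_eq_left hmIoo.1.le] at this
      have : x ∈ B := ⟨⟨hx1, hx2⟩, by
        simp only [Set.mem_preimage]
        rw [← hxeq]
        exact hC₂mem⟩
      rw [hB] at this
      exact this
  obtain ⟨m', hm'B, hm'ub⟩ := hBcomp.exists_isGreatest hBne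
  obtain ⟨hm'Ioo, tm', htm', htm'eq⟩ := hrealball γ₂ hint₂ h20 h21 m' hm'B.2
  have hm'm : m' < m := by
    rcases lt_or_eq_of_le hm'B.1.2 with h | h
    · exact h
    · exfalso
      have : (m:ℂ) ∈ C₂ := by rw [← h]; exact hm'B.2
      rw [← htmeq] at this
      exact hdisj₁ tm htm this
  -- the island point z₀ and the far point y
  set z₀ : ℝ := (m' + m) / 2 with hz₀d
  have hz₀1 : m' < z₀ := by rw [hz₀d]; linarith
  have hz₀2 : z₀ < m := by rw [hz₀d]; linarith
  have hz₀Ioo : z₀ ∈ Ioo (-1:ℝ) 1 := ⟨by linarith [hm'Ioo.1], by linarith [hmIoo.2]⟩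
  have hz₀C₁ : (z₀:ℂ) ∉ C₁ := by
    intro hC
    have : z₀ ∈ A₁ := ⟨⟨hz₀Ioo.1.le, hz₀Ioo.2.le⟩, hC⟩
    have := hmlb this
    linarith
  have hz₀C₂ : (z₀:ℂ) ∉ C₂ := by
    intro hC
    have : z₀ ∈ B := ⟨⟨hz₀Ioo.1.le, hz₀2.le⟩, hC⟩
    have := hm'ub this
    linarith
  -- the lowest real point of J
  set Aall : Set ℝ := Icc (-1:ℝ) 1 ∩ (fun x : ℝ => (x:ℂ)) ⁻¹' (C₁ ∪ C₂) with hAalld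
  have hAallcomp : IsCompact Aall :=
    isCompact_Icc.inter_right ((hC₁closed.union hC₂closed).preimage Complex.continuous_ofReal)
  have hAallne : Aall.Nonempty := ⟨l, hl, Or.inl hl1⟩
  obtain ⟨w, hwA, hwlb⟩ := hAallcomp.exists_isLeast hAallne
  have hwIoo : w ∈ Ioo (-1:ℝ) 1 := by
    rcases hwA.2 with h | h
    · exact (hrealball γ₁ hint₁ h10 h11 w h).1
    · exact (hrealball γ₂ hint₂ h20 h21 w h).1
  set y : ℝ := (w - 1) / 2 with hyd
  have hy1 : -1 < y := by rw [hyd]; linarith [hwIoo.1]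
  have hy2 : y < w := by rw [hyd]; linarith [hwIoo.2]
  have hy3 : y < 1 := by rw [hyd]; linarith [hwIoo.2]
  have hyJ : (y:ℂ) ∉ C₁ ∪ C₂ := by
    intro hC
    have : y ∈ Aall := ⟨⟨hy1.le, hy3.le⟩, hC⟩
    have := hwlb this
    linarith
  have hrmem : ∀ x : ℝ, x ∈ Ioo (-1:ℝ) 1 → (x:ℂ) ∈ ball (0:ℂ) 1 := by
    intro x hx
    rw [mem_ball_zero_iff, Complex.norm_real, Real.norm_eq_abs, abs_lt]
    exact hx
  refine ⟨(z₀:ℂ), (y:ℂ), ⟨hrmem z₀ hz₀Ioo, ?_⟩, ⟨hrmem y ⟨hy1, hy3⟩, hyJ⟩, ?_⟩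
  · rintro (h | h)
    · exact hz₀C₁ h
    · exact hz₀C₂ h
  intro hJoin
  obtain ⟨q, hq⟩ := hJoin
  -- the grand path from 1 to -1 avoiding C₂
  set P : Path ((1:ℝ):ℂ) ((-1:ℝ):ℂ) :=
    (realSeg 1 l).trans (pφ.trans ((realSeg m z₀).trans (q.trans (realSeg y (-1)))))
    with hPd
  set Pc : Path (1:ℂ) (-1:ℂ) := P.cast (by norm_num) (by norm_num) with hPcd
  have hPrange : range ⇑Pc = range ⇑(realSeg 1 l) ∪ (range ⇑pφ ∪
      (range ⇑(realSeg m z₀) ∪ (range ⇑q ∪ range ⇑(realSeg y (-1))))) := by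
    rw [hPcd, Path.cast_coe, hPd, Path.trans_range, Path.trans_range, Path.trans_range,
      Path.trans_range]
  have hgb : ∀ t ∈ Icc (0:ℝ) 1, Pc.extend t ∈ closedBall (0:ℂ) 1 := by
    intro t _
    have hmem : Pc.extend t ∈ range ⇑Pc := by
      rw [← Path.extend_range]; exact mem_range_self t
    rw [hPrange] at hmem
    rcases hmem with h | h | h | h | h
    · exact hseg 1 l (by norm_num) ⟨hlIoo.1.le, hlIoo.2.le⟩ _ h
    · exact hpφball _ h
    · exact hseg m z₀ ⟨hmIoo.1.le, hmIoo.2.le⟩ ⟨hz₀Ioo.1.le, hz₀Ioo.2.le⟩ _ h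
    · obtain ⟨u, hu⟩ := h
      rw [← hu]
      exact ball_subset_closedBall (hq u).1
    · exact hseg y (-1) ⟨hy1.le, hy3.le⟩ (by norm_num) _ h
  obtain ⟨s, hs, t, ht, heq⟩ := crossN he0 heπ hcont₂
    Pc.continuous_extend.continuousOn
    (fun s hs => hCb γ₂ h20 h21 hint₂ s hs) hgb h20 h21
    (Pc.extend_zero) (Pc.extend_one)
  have hmem : Pc.extend t ∈ range ⇑Pc := by
    rw [← Path.extend_range]; exact mem_range_self t
  have hC₂mem : Pc.extend t ∈ C₂ := ⟨s, hs, heq⟩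
  rw [hPrange] at hmem
  rcases hmem with h | h | h | h | h
  · exact hseg1C₂ _ h hC₂mem
  · exact hpφC₂ _ h hC₂mem
  · obtain ⟨x, hx, hxeq⟩ := realSeg_mem m z₀ _ h
    have hx1 : z₀ ≤ x := by
      have := hx.1; rwa [min_eq_right hz₀2.le] at this
    have hx2 : x ≤ m := by
      have := hx.2; rwa [max_eq_left hz₀2.le] at this
    have hxB : x ∈ B := ⟨⟨by linarith [hz₀Ioo.1], hx2⟩, by
      simp only [Set.mem_preimage]
      rw [← hxeq]
      exact hC₂mem⟩
    have := hm'ub hxB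
    linarith
  · obtain ⟨u, hu⟩ := h
    have := (hq u).2
    rw [hu] at this
    exact this (Or.inr hC₂mem)
  · obtain ⟨x, hx, hxeq⟩ := realSeg_mem y (-1) _ h
    have hx1 : -1 ≤ x := by
      have := hx.1; rwa [min_eq_right hy1.le] at this
    have hx2 : x ≤ y := by
      have := hx.2; rwa [max_eq_left hy1.le] at this
    have hxA : x ∈ Aall := ⟨⟨hx1, by linarith⟩, by
      simp only [Set.mem_preimage]
      rw [← hxeq]
      exact Or.inr hC₂mem⟩
    have := hwlb hxA
    linarith

set_option maxHeartbeats 1000000 in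
private lemma main0 {e : ℝ} (he0 : 0 < e) (heπ : e < π) {γ₁ γ₂ : ℝ → ℂ}
    (hcont₁ : ContinuousOn γ₁ (Icc 0 1)) (hcont₂ : ContinuousOn γ₂ (Icc 0 1))
    (h10 : γ₁ 0 = Complex.exp (-(e:ℂ) * Complex.I))
    (h11 : γ₁ 1 = Complex.exp ((e:ℂ) * Complex.I))
    (h20 : γ₂ 0 = Complex.exp (-(e:ℂ) * Complex.I))
    (h21 : γ₂ 1 = Complex.exp ((e:ℂ) * Complex.I))
    (hint₁ : γ₁ '' Ioo 0 1 ⊆ ball 0 1) (hint₂ : γ₂ '' Ioo 0 1 ⊆ ball 0 1)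
    (hmeet : γ₁ '' Ioo 0 1 ∩ γ₂ '' Ioo 0 1 = ∅) :
    ¬ IsPreconnected (ball (0:ℂ) 1 \ (γ₁ '' Icc 0 1 ∪ γ₂ '' Icc 0 1)) := by
  -- the real chord meets the curves
  set Pc : Path (1:ℂ) (-1:ℂ) := (realSeg 1 (-1)).cast (by norm_num) (by norm_num) with hPcd
  have hPcb : ∀ t ∈ Icc (0:ℝ) 1, Pc.extend t ∈ closedBall (0:ℂ) 1 := by
    intro t _
    have hmem : Pc.extend t ∈ range ⇑Pc := by
      rw [← Path.extend_range]; exact mem_range_self t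
    rw [hPcd, Path.cast_coe] at hmem
    obtain ⟨x, hx, hxeq⟩ := realSeg_mem 1 (-1) _ hmem
    rw [hxeq, mem_closedBall_zero_iff, Complex.norm_real, Real.norm_eq_abs, abs_le]
    rcases hx with ⟨ha, hb⟩
    constructor
    · simpa using ha
    · simpa using hb
  have hCb : ∀ (γ : ℝ → ℂ), γ 0 = Complex.exp (-(e:ℂ) * Complex.I) →
      γ 1 = Complex.exp ((e:ℂ) * Complex.I) → γ '' Ioo 0 1 ⊆ ball 0 1 →
      ∀ t ∈ Icc (0:ℝ) 1, γ t ∈ closedBall (0:ℂ) 1 := by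
    intro γ hγ0 hγ1 hbi t ht
    rcases lt_or_eq_of_le ht.1 with h0 | h0
    · rcases lt_or_eq_of_le ht.2 with h1 | h1
      · exact ball_subset_closedBall (hbi ⟨t, ⟨h0, h1⟩, rfl⟩)
      · rw [h1, hγ1, mem_closedBall_zero_iff,
          show ((e:ℂ) * Complex.I) = ((e : ℝ):ℂ) * Complex.I by norm_num,
          Complex.norm_exp_ofReal_mul_I]
    · rw [← h0, hγ0, mem_closedBall_zero_iff,
        show (-(e:ℂ) * Complex.I) = ((-e : ℝ):ℂ) * Complex.I by push_cast; ring,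
        Complex.norm_exp_ofReal_mul_I]
  set C₁ : Set ℂ := γ₁ '' Icc 0 1 with hC₁d
  set C₂ : Set ℂ := γ₂ '' Icc 0 1 with hC₂d
  have hC₁closed : IsClosed C₁ := (isCompact_Icc.image_of_continuousOn hcont₁).isClosed
  have hC₂closed : IsClosed C₂ := (isCompact_Icc.image_of_continuousOn hcont₂).isClosed
  set Aall : Set ℝ := Icc (-1:ℝ) 1 ∩ (fun x : ℝ => (x:ℂ)) ⁻¹' (C₁ ∪ C₂) with hAalld
  have hAallcomp : IsCompact Aall :=
    isCompact_Icc.inter_right ((hC₁closed.union hC₂closed).preimage Complex.continuous_ofReal)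
  have hAallne : Aall.Nonempty := by
    obtain ⟨s, hs, t, ht, heq⟩ := crossN he0 heπ hcont₁
      Pc.continuous_extend.continuousOn
      (fun s hs => hCb γ₁ h10 h11 hint₁ s hs) hPcb h10 h11
      (Pc.extend_zero) (Pc.extend_one)
    have hmem : Pc.extend t ∈ range ⇑Pc := by
      rw [← Path.extend_range]; exact mem_range_self t
    rw [hPcd, Path.cast_coe] at hmem
    obtain ⟨x, hx, hxeq⟩ := realSeg_mem 1 (-1) _ hmem
    refine ⟨x, ⟨by simpa using hx.1, by simpa using hx.2⟩, ?_⟩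
    simp only [Set.mem_preimage]
    left
    rw [← hxeq]
    exact ⟨s, hs, heq⟩
  obtain ⟨l, hlA, hlub⟩ := hAallcomp.exists_isGreatest hAallne
  have hlub' : ∀ x ∈ Icc (-1:ℝ) 1, (x:ℂ) ∈ C₁ ∪ C₂ → x ≤ l := by
    intro x hx hmem
    exact hlub ⟨hx, hmem⟩
  have hmain : ∃ z₀ y : ℂ, z₀ ∈ ball (0:ℂ) 1 \ (C₁ ∪ C₂) ∧
      y ∈ ball (0:ℂ) 1 \ (C₁ ∪ C₂) ∧ ¬ JoinedIn (ball (0:ℂ) 1 \ (C₁ ∪ C₂)) z₀ y := by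
    rcases hlA.2 with hin | hin
    · exact key he0 heπ hcont₁ hcont₂ h10 h11 h20 h21 hint₁ hint₂ hmeet hlA.1 hin hlub'
    · have hmeet' : γ₂ '' Ioo 0 1 ∩ γ₁ '' Ioo 0 1 = ∅ := by rw [inter_comm]; exact hmeet
      have hlub'' : ∀ x ∈ Icc (-1:ℝ) 1, (x:ℂ) ∈ C₂ ∪ C₁ → x ≤ l := by
        intro x hx hmem
        exact hlub' x hx (Or.symm hmem)
      obtain ⟨z₀, y, h1, h2, h3⟩ := key he0 heπ hcont₂ hcont₁ h20 h21 h10 h11 hint₂ hint₁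
        hmeet' hlA.1 hin hlub''
      rw [union_comm] at h1 h2 h3
      exact ⟨z₀, y, h1, h2, h3⟩
  obtain ⟨z₀, y, hz₀, hy, hnj⟩ := hmain
  intro hpre
  have hopen : IsOpen (ball (0:ℂ) 1 \ (C₁ ∪ C₂)) :=
    isOpen_ball.sdiff (hC₁closed.union hC₂closed)
  have hconn : IsConnected (ball (0:ℂ) 1 \ (C₁ ∪ C₂)) := ⟨⟨z₀, hz₀⟩, hpre⟩
  have hpath : IsPathConnected (ball (0:ℂ) 1 \ (C₁ ∪ C₂)) :=
    hopen.isConnected_iff_isPathConnected.1 hconn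
  exact hnj (hpath.joinedIn z₀ hz₀ y hy)




set_option maxHeartbeats 1000000 in
/-- An island is formed: removing from an open disc two injective arcs joining two
boundary points, meeting only at the endpoints and avoiding the center, leaves a
disconnected set, and points in distinct components cannot be joined by a path
in the remaining set. -/
theorem island_formation (c : ℂ) (r : ℝ) (hr : 0 < r) (z₁ z₂ : ℂ)
    (hz₁ : z₁ ∈ sphere c r) (hz₂ : z₂ ∈ sphere c r) (hz : z₁ ≠ z₂)
    (γ₁ γ₂ : ℝ → ℂ)
    (hc₁ : ContinuousOn γ₁ (Icc 0 1)) (hc₂ : ContinuousOn γ₂ (Icc 0 1))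
    (hi₁ : InjOn γ₁ (Icc 0 1)) (hi₂ : InjOn γ₂ (Icc 0 1))
    (h10 : γ₁ 0 = z₁) (h11 : γ₁ 1 = z₂) (h20 : γ₂ 0 = z₁) (h21 : γ₂ 1 = z₂)
    (hint₁ : γ₁ '' Ioo 0 1 ⊆ ball c r) (hint₂ : γ₂ '' Ioo 0 1 ⊆ ball c r)
    (hmeet : γ₁ '' Ioo 0 1 ∩ γ₂ '' Ioo 0 1 = ∅)
    (hcenter : c ∉ γ₁ '' Icc 0 1 ∪ γ₂ '' Icc 0 1) :
    ¬ IsPreconnected (ball c r \ (γ₁ '' Icc 0 1 ∪ γ₂ '' Icc 0 1)) ∧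
    ∀ x ∈ ball c r \ (γ₁ '' Icc 0 1 ∪ γ₂ '' Icc 0 1),
      ∀ y ∈ ball c r \ (γ₁ '' Icc 0 1 ∪ γ₂ '' Icc 0 1),
        connectedComponentIn (ball c r \ (γ₁ '' Icc 0 1 ∪ γ₂ '' Icc 0 1)) x ≠
          connectedComponentIn (ball c r \ (γ₁ '' Icc 0 1 ∪ γ₂ '' Icc 0 1)) y →
        ¬ JoinedIn (ball c r \ (γ₁ '' Icc 0 1 ∪ γ₂ '' Icc 0 1)) x y := by
  have hπ := Real.pi_pos
  constructor
  · -- normalization to the unit disc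
    have hrC : (r:ℂ) ≠ 0 := by exact_mod_cast hr.ne'
    have habs₁ : ‖z₁ - c‖ = r := by
      have := hz₁
      rwa [mem_sphere, Complex.dist_eq] at this
    have habs₂ : ‖z₂ - c‖ = r := by
      have := hz₂
      rwa [mem_sphere, Complex.dist_eq] at this
    set α₁ : ℝ := (z₁ - c).arg with hα₁d
    set α₂ : ℝ := (z₂ - c).arg with hα₂d
    have he₁ : z₁ - c = (r:ℂ) * Complex.exp ((α₁:ℝ) * Complex.I) := by
      conv_lhs => rw [← Complex.norm_mul_exp_arg_mul_I (z₁ - c)]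
      rw [habs₁]
    have he₂ : z₂ - c = (r:ℂ) * Complex.exp ((α₂:ℝ) * Complex.I) := by
      conv_lhs => rw [← Complex.norm_mul_exp_arg_mul_I (z₂ - c)]
      rw [habs₂]
    set φ : ℝ := α₂ - α₁ with hφd
    have hφ1 : -(2*π) < φ := by
      have h1 := Complex.neg_pi_lt_arg (z₂ - c)
      have h2 := Complex.arg_le_pi (z₁ - c)
      rw [hφd]; simp only [hα₁d, hα₂d]; linarith
    have hφ2 : φ < 2*π := by
      have h1 := Complex.arg_le_pi (z₂ - c)
      have h2 := Complex.neg_pi_lt_arg (z₁ - c)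
      rw [hφd]; simp only [hα₁d, hα₂d]; linarith
    have hφ0 : φ ≠ 0 := by
      intro h0
      have : α₁ = α₂ := by rw [hφd] at h0; linarith [sub_eq_zero.mp h0]
      apply hz
      have : z₁ - c = z₂ - c := by rw [he₁, he₂, this]
      linear_combination this
    set e : ℝ := if 0 < φ then φ/2 else φ/2 + π with hed
    have he0 : 0 < e := by
      rw [hed]
      split_ifs with h
      · linarith
      · push_neg at h
        rcases lt_or_eq_of_le h with h' | h'
        · linarith
        · exact absurd h' hφ0
    have heπ : e < π := by
      rw [hed]
      split_ifs with h
      · linarith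
      · push_neg at h
        rcases lt_or_eq_of_le h with h' | h'
        · linarith
        · exact absurd h' hφ0
    set δ : ℝ := α₁ + e with hδd
    have hδe : Complex.exp (((α₂ - δ : ℝ):ℂ) * Complex.I) = Complex.exp ((e:ℝ) * Complex.I) := by
      rw [hδd, hed]
      split_ifs with h
      · congr 1
        push_cast
        rw [hφd]
        push_cast
        ring
      · have harg : ((α₂ - (α₁ + (φ/2 + π)) : ℝ):ℂ) * Complex.I
            = ((φ/2 + π - 2*π : ℝ):ℂ) * Complex.I + ((-(2*π) + 2*π : ℝ):ℂ) * Complex.I := by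
          push_cast
          rw [hφd]
          push_cast
          ring
        have : ((α₂ - (α₁ + (φ/2 + π)) : ℝ):ℂ) * Complex.I
            = ((φ/2 + π : ℝ):ℂ) * Complex.I + (-(2*π:ℝ) :ℂ) * Complex.I := by
          push_cast
          rw [hφd]
          push_cast
          ring
        rw [this, Complex.exp_add]
        have hexp2π : Complex.exp ((-(2*π:ℝ):ℂ) * Complex.I) = 1 := by
          have := Complex.exp_int_mul_two_pi_mul_I (-1)
          rw [← this]
          congr 1
          push_cast
          ring
        rw [hexp2π, mul_one]
    set T : ℂ → ℂ := fun z => Complex.exp (-(δ:ℂ) * Complex.I) * ((z - c) / r) with hTd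
    have hTcont : Continuous T := by
      apply continuous_const.mul
      exact (continuous_id.sub continuous_const).div_const _
    have hTinj : Function.Injective T := by
      intro a b hab
      simp only [hTd] at hab
      have hexpne : Complex.exp (-(δ:ℂ) * Complex.I) ≠ 0 := Complex.exp_ne_zero _
      field_simp at hab
      linear_combination hab
    have hstep₁ : (z₁ - c) / (r:ℂ) = Complex.exp ((α₁:ℝ) * Complex.I) := by
      rw [he₁]
      field_simp
    have hstep₂ : (z₂ - c) / (r:ℂ) = Complex.exp ((α₂:ℝ) * Complex.I) := by
      rw [he₂]
      field_simp
    have hTz₁ : T z₁ = Complex.exp (-(e:ℂ) * Complex.I) := by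
      simp only [hTd]
      rw [hstep₁, ← Complex.exp_add]
      congr 1
      rw [hδd]
      push_cast
      ring
    have hTz₂ : T z₂ = Complex.exp ((e:ℂ) * Complex.I) := by
      simp only [hTd]
      rw [hstep₂, ← Complex.exp_add]
      have : (-(δ:ℂ) * Complex.I + ((α₂:ℝ):ℂ) * Complex.I) = ((α₂ - δ : ℝ):ℂ) * Complex.I := by
        push_cast
        ring
      rw [this, hδe]
    have hTnorm : ∀ z : ℂ, ‖T z‖ = ‖z - c‖ / r := by
      intro z
      simp only [hTd]
      rw [norm_mul, norm_div]
      have h1 : ‖Complex.exp (-(δ:ℂ) * Complex.I)‖ = 1 := by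
        rw [show (-(δ:ℂ) * Complex.I) = ((-δ:ℝ):ℂ) * Complex.I by push_cast; ring,
          Complex.norm_exp_ofReal_mul_I]
      rw [h1, one_mul]
      congr 1
      rw [Complex.norm_real, Real.norm_eq_abs, abs_of_pos hr]
    have hTball : T '' ball c r = ball (0:ℂ) 1 := by
      ext w
      constructor
      · rintro ⟨z, hz', rfl⟩
        rw [mem_ball_zero_iff, hTnorm, div_lt_one hr]
        rwa [mem_ball, dist_eq_norm] at hz'
      · intro hw
        refine ⟨c + (r:ℂ) * Complex.exp ((δ:ℝ) * Complex.I) * w, ?_, ?_⟩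
        · rw [mem_ball, dist_eq_norm]
          have : c + (r:ℂ) * Complex.exp ((δ:ℝ) * Complex.I) * w - c
              = (r:ℂ) * Complex.exp ((δ:ℝ) * Complex.I) * w := by ring
          rw [this, norm_mul, norm_mul]
          have h1 : ‖Complex.exp (((δ:ℝ):ℂ) * Complex.I)‖ = 1 := by
            rw [Complex.norm_exp_ofReal_mul_I]
          rw [h1, mul_one]
          have h2 : ‖(r:ℂ)‖ = r := by
            rw [Complex.norm_real, Real.norm_eq_abs, abs_of_pos hr]
          rw [h2]
          rw [mem_ball_zero_iff] at hw
          nlinarith [norm_nonneg w, hw]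
        · simp only [hTd]
          have h4 : c + (r:ℂ) * Complex.exp ((δ:ℝ) * Complex.I) * w - c
              = (r:ℂ) * Complex.exp ((δ:ℝ) * Complex.I) * w := by ring
          rw [h4]
          have h5 : ((r:ℂ) * Complex.exp ((δ:ℝ) * Complex.I) * w) / (r:ℂ)
              = Complex.exp ((δ:ℝ) * Complex.I) * w := by
            field_simp
          rw [h5, ← mul_assoc, ← Complex.exp_add]
          have h6 : (-(δ:ℂ) * Complex.I + ((δ:ℝ):ℂ) * Complex.I) = 0 := by
            push_cast
            ring
          rw [h6, Complex.exp_zero, one_mul]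
    -- apply the normalized result
    have hmain := main0 he0 heπ (γ₁ := T ∘ γ₁) (γ₂ := T ∘ γ₂)
      (hTcont.comp_continuousOn hc₁) (hTcont.comp_continuousOn hc₂)
      (by simp only [Function.comp_apply, h10, hTz₁])
      (by simp only [Function.comp_apply, h11, hTz₂])
      (by simp only [Function.comp_apply, h20, hTz₁])
      (by simp only [Function.comp_apply, h21, hTz₂])
      (by rw [Set.image_comp]
          exact hTball ▸ (Set.image_mono hint₁ : T '' _ ⊆ T '' _))
      (by rw [Set.image_comp]
          exact hTball ▸ (Set.image_mono hint₂ : T '' _ ⊆ T '' _))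
      (by rw [Set.image_comp, Set.image_comp, ← Set.image_inter hTinj, hmeet, Set.image_empty])
    intro hpre
    apply hmain
    have himg : T '' (ball c r \ (γ₁ '' Icc 0 1 ∪ γ₂ '' Icc 0 1))
        = ball (0:ℂ) 1 \ ((T ∘ γ₁) '' Icc 0 1 ∪ (T ∘ γ₂) '' Icc 0 1) := by
      rw [Set.image_diff hTinj, hTball, Set.image_union, Set.image_comp, Set.image_comp]
    rw [← himg]
    exact hpre.image T hTcont.continuousOn
  · -- joined points lie in the same component
    intro x hx y hy hne hJoin
    obtain ⟨p, hp⟩ := hJoin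
    have hsub : range ⇑p ⊆ ball c r \ (γ₁ '' Icc 0 1 ∪ γ₂ '' Icc 0 1) := by
      rintro w ⟨u, rfl⟩
      exact hp u
    have hpre : IsPreconnected (range ⇑p) := isPreconnected_range p.continuous
    have hmem : y ∈ connectedComponentIn (ball c r \ (γ₁ '' Icc 0 1 ∪ γ₂ '' Icc 0 1)) x := by
      apply hpre.subset_connectedComponentIn ⟨0, p.source⟩ hsub
      exact ⟨1, p.target⟩
    exact hne (connectedComponentIn_eq hmem)
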